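/- arXiv:1910.06394 — 4 statements merged into one kernel-verified Lean document; each statement's English description precedes it below -/
import Mathlib

section
/- A functional μ : C⁰(X) → ℝ is a positive strong submeasure if and only if there exists a non-empty collection 𝒢 of finite positive Borel measures on X with sup_{χ∈𝒢} χ(1) < ∞ such that μ(φ) = sup_{χ∈𝒢} ∫φ dχ for all continuous functions φ. -/
open MeasureTheory Set TopologicalSpace
open scoped ENNReal NNReal

/-- A strong submeasure on a compact metric space `X`: a sublinear and bounded
functional on `C(X, ℝ)`. -/
def IsStrongSubmeasure {X : Type*} [TopologicalSpace X] [CompactSpace X] (μ : C(X, ℝ) → ℝ) : Prop :=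
  (∀ φ ψ : C(X, ℝ), μ (φ + ψ) ≤ μ φ + μ ψ) ∧
  (∀ c : ℝ, 0 ≤ c → ∀ φ : C(X, ℝ), μ (c • φ) = c * μ φ) ∧
  (∃ C : ℝ, 0 < C ∧ ∀ φ : C(X, ℝ), |μ φ| ≤ C * ‖φ‖)

namespace RMKaux

variable {X : Type*} [MetricSpace X] [CompactSpace X]

/-- Test functions for the Riesz content of a set `K`. -/
def testSet (K : Set X) : Set C(X, ℝ) := {f | (∀ x, 0 ≤ f x) ∧ ∀ x ∈ K, 1 ≤ f x}

variable (ℓ : C(X, ℝ) →ₗ[ℝ] ℝ)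

/-- The Riesz content of a set `K` associated to a positive linear functional `ℓ`. -/
noncomputable def rc (K : Set X) : ℝ := sInf (ℓ '' testSet K)

variable {ℓ}

lemma one_mem_testSet (K : Set X) : (1 : C(X, ℝ)) ∈ testSet K :=
  ⟨fun _ => zero_le_one, fun _ _ => le_refl _⟩

lemma testSet_nonempty (K : Set X) : (ℓ '' testSet K).Nonempty :=
  ⟨ℓ 1, ⟨1, one_mem_testSet K, rfl⟩⟩

section pos

variable (hpos : ∀ f : C(X, ℝ), (∀ x, 0 ≤ f x) → 0 ≤ ℓ f)
include hpos

lemma ell_mono {f g : C(X, ℝ)} (h : ∀ x, f x ≤ g x) : ℓ f ≤ ℓ g := by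
  have h0 : 0 ≤ ℓ (g - f) := hpos _ (fun x => by simpa using sub_nonneg.2 (h x))
  have : ℓ (g - f) = ℓ g - ℓ f := by rw [map_sub]
  linarith [this ▸ h0]

lemma lb (K : Set X) : ∀ y ∈ ℓ '' testSet K, (0:ℝ) ≤ y := by
  rintro y ⟨f, hf, rfl⟩
  exact hpos f hf.1

lemma bddBelow_image (K : Set X) : BddBelow (ℓ '' testSet K) :=
  ⟨0, fun y hy => lb hpos K y hy⟩

lemma rc_nonneg (K : Set X) : 0 ≤ rc ℓ K :=
  le_csInf (testSet_nonempty K) (lb hpos K)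

lemma rc_le {K : Set X} {f : C(X, ℝ)} (hf : f ∈ testSet K) : rc ℓ K ≤ ℓ f :=
  csInf_le (bddBelow_image hpos K) ⟨f, hf, rfl⟩

omit hpos in
lemma le_rc {K : Set X} {c : ℝ} (h : ∀ f ∈ testSet K, c ≤ ℓ f) : c ≤ rc ℓ K :=
  le_csInf (testSet_nonempty K) (by rintro y ⟨f, hf, rfl⟩; exact h f hf)

lemma rc_mono {K₁ K₂ : Set X} (h : K₁ ⊆ K₂) : rc ℓ K₁ ≤ rc ℓ K₂ :=
  le_rc (fun f hf => rc_le hpos ⟨hf.1, fun x hx => hf.2 x (h hx)⟩)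

omit hpos in
lemma exists_test_lt {K : Set X} {ε : ℝ} (hε : 0 < ε) :
    ∃ f ∈ testSet K, ℓ f < rc ℓ K + ε := by
  obtain ⟨y, hy, hlt⟩ := Real.lt_sInf_add_pos (testSet_nonempty K) hε
  obtain ⟨f, hf, rfl⟩ := hy
  exact ⟨f, hf, hlt⟩

lemma rc_subadd (K₁ K₂ : Set X) : rc ℓ (K₁ ∪ K₂) ≤ rc ℓ K₁ + rc ℓ K₂ := by
  refine le_of_forall_pos_le_add (fun ε hε => ?_)
  obtain ⟨f₁, hf₁, hl₁⟩ := exists_test_lt (ℓ := ℓ) (K := K₁) (half_pos hε)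
  obtain ⟨f₂, hf₂, hl₂⟩ := exists_test_lt (ℓ := ℓ) (K := K₂) (half_pos hε)
  have hdummy := hpos
  have hmem : f₁ + f₂ ∈ testSet (K₁ ∪ K₂) := by
    refine ⟨fun x => add_nonneg (hf₁.1 x) (hf₂.1 x), ?_⟩
    rintro x (hx | hx)
    · have := hf₁.2 x hx
      have := hf₂.1 x
      simp only [ContinuousMap.add_apply]
      linarith
    · have := hf₂.2 x hx
      have := hf₁.1 x
      simp only [ContinuousMap.add_apply]
      linarith
  have := rc_le hpos hmem
  rw [map_add] at this
  linarith

lemma rc_superadd {K₁ K₂ : Set X} (h₁ : IsClosed K₁) (h₂ : IsClosed K₂)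
    (hd : Disjoint K₁ K₂) : rc ℓ K₁ + rc ℓ K₂ ≤ rc ℓ (K₁ ∪ K₂) := by
  obtain ⟨g, hg0, hg1, hg01⟩ := exists_continuous_zero_one_of_isClosed h₂ h₁ hd.symm
  refine le_rc (fun f hf => ?_)
  have hmem₁ : f * g ∈ testSet K₁ := by
    refine ⟨fun x => mul_nonneg (hf.1 x) (hg01 x).1, fun x hx => ?_⟩
    have := hf.2 x (Or.inl hx)
    have := hg1 hx
    simp only [ContinuousMap.mul_apply]
    simp only [Pi.one_apply] at *
    nlinarith [hf.1 x]
  have hmem₂ : f * (1 - g) ∈ testSet K₂ := by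
    refine ⟨fun x => mul_nonneg (hf.1 x) (by simpa using (hg01 x).2), fun x hx => ?_⟩
    have := hf.2 x (Or.inr hx)
    have h0 := hg0 hx
    simp only [Pi.zero_apply] at h0
    simp only [ContinuousMap.mul_apply, ContinuousMap.sub_apply, ContinuousMap.one_apply, h0]
    linarith
  have hsum : f * g + f * (1 - g) = f := by ring
  calc rc ℓ K₁ + rc ℓ K₂ ≤ ℓ (f * g) + ℓ (f * (1 - g)) :=
        add_le_add (rc_le hpos hmem₁) (rc_le hpos hmem₂)
    _ = ℓ (f * g + f * (1 - g)) := (map_add ℓ _ _).symm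
    _ = ℓ f := by rw [hsum]

/-- The Riesz content as a `Content`. -/
noncomputable def rcContent : Content X where
  toFun K := (rc ℓ K).toNNReal
  mono' K₁ K₂ h := Real.toNNReal_mono (rc_mono hpos h)
  sup_disjoint' K₁ K₂ hd _ _ := by
    have h1 : rc ℓ ((K₁ : Set X) ∪ K₂) = rc ℓ K₁ + rc ℓ K₂ :=
      le_antisymm (rc_subadd hpos _ _)
        (rc_superadd hpos K₁.2.isClosed K₂.2.isClosed hd)
    show (rc ℓ ((K₁ : Set X) ∪ K₂)).toNNReal = _
    simp only [h1, Real.toNNReal_add (rc_nonneg hpos _) (rc_nonneg hpos _)]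
  sup_le' K₁ K₂ := by
    rw [← Real.toNNReal_add (rc_nonneg hpos _) (rc_nonneg hpos _)]
    exact Real.toNNReal_mono (rc_subadd hpos (K₁ : Set X) K₂)

end pos

section meas

variable [MeasurableSpace X] [BorelSpace X]
variable (hpos : ∀ f : C(X, ℝ), (∀ x, 0 ≤ f x) → 0 ≤ ℓ f)

/-- The Riesz measure associated to a positive linear functional. -/
noncomputable def rmkMeasure : Measure X := (rcContent hpos).measure

include hpos

lemma rmk_open {U : Set X} (hU : IsOpen U) :
    rmkMeasure hpos U = (rcContent hpos).innerContent ⟨U, hU⟩ := by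
  rw [rmkMeasure, Content.measure_apply _ hU.measurableSet]
  exact Content.outerMeasure_opens _ ⟨U, hU⟩

lemma rmk_univ : rmkMeasure hpos Set.univ = ((rc ℓ Set.univ).toNNReal : ℝ≥0∞) := by
  rw [rmk_open hpos isOpen_univ]
  have := Content.innerContent_of_isCompact (rcContent hpos) isCompact_univ isOpen_univ
  rw [this]
  rfl

lemma rmk_finite : IsFiniteMeasure (rmkMeasure hpos) := by
  constructor
  rw [rmk_univ hpos]
  exact ENNReal.coe_lt_top

lemma rmk_univ_toReal : (rmkMeasure hpos Set.univ).toReal = rc ℓ Set.univ := by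
  rw [rmk_univ hpos, ENNReal.coe_toReal, Real.coe_toNNReal _ (rc_nonneg hpos _)]

lemma rmk_ne_top (E : Set X) : rmkMeasure hpos E ≠ ⊤ := by
  have := rmk_finite hpos
  exact measure_ne_top _ E

lemma ell_le_rmk_open {h : C(X, ℝ)} (h0 : ∀ x, 0 ≤ h x) (h1 : ∀ x, h x ≤ 1)
    {U : Set X} (hU : IsOpen U) (hsupp : tsupport h ⊆ U) :
    ℓ h ≤ (rmkMeasure hpos U).toReal := by
  have hKc : IsCompact (tsupport h) := (isClosed_tsupport h).isCompact
  have step1 : ℓ h ≤ rc ℓ (tsupport h) := by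
    refine le_rc (fun g hg => ell_mono hpos (fun x => ?_))
    by_cases hx : x ∈ tsupport h
    · exact (h1 x).trans (hg.2 x hx)
    · rw [image_eq_zero_of_notMem_tsupport hx]
      exact hg.1 x
  have step2 : ((rc ℓ (tsupport h)).toNNReal : ℝ≥0∞) ≤
      (rcContent hpos).innerContent ⟨U, hU⟩ :=
    Content.le_innerContent _ ⟨tsupport h, hKc⟩ ⟨U, hU⟩ hsupp
  rw [← rmk_open hpos hU] at step2
  have hfin : rmkMeasure hpos U ≠ ⊤ := rmk_ne_top hpos U
  have := ENNReal.toReal_mono hfin step2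
  rw [ENNReal.coe_toReal, Real.coe_toNNReal _ (rc_nonneg hpos _)] at this
  exact step1.trans this

lemma rmk_exists_open {E W : Set X} (hW : IsOpen W) (hEW : E ⊆ W)
    {ε : ℝ≥0∞} (hε : ε ≠ 0) :
    ∃ V : Set X, IsOpen V ∧ E ⊆ V ∧ V ⊆ W ∧
      rmkMeasure hpos V ≤ rmkMeasure hpos E + ε := by
  haveI : (rmkMeasure hpos).OuterRegular := Content.outerRegular _
  obtain ⟨U, hEU, hUo, hUlt⟩ := Set.exists_isOpen_lt_of_lt (μ := rmkMeasure hpos) E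
    (rmkMeasure hpos E + ε) (ENNReal.lt_add_right (rmk_ne_top hpos E) hε)
  exact ⟨U ∩ W, hUo.inter hW, Set.subset_inter hEU hEW, Set.inter_subset_right,
    le_trans (measure_mono Set.inter_subset_left) hUlt.le⟩

lemma cont_integrable (φ : C(X, ℝ)) : Integrable (fun x => φ x) (rmkMeasure hpos) := by
  haveI := rmk_finite hpos
  have := (BoundedContinuousFunction.mkOfCompact φ).integrable (rmkMeasure hpos)
  exact this

set_option maxHeartbeats 2000000 in
lemma ell_le_integral (f : C(X, ℝ)) : ℓ f ≤ ∫ x, f x ∂(rmkMeasure hpos) := by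
  haveI := rmk_finite hpos
  set T : ℝ := (rmkMeasure hpos Set.univ).toReal with hTdef
  have hT0 : 0 ≤ T := ENNReal.toReal_nonneg
  set b : ℝ := ‖f‖ + 1 with hbdef
  have hb0 : (0:ℝ) < b := by
    rw [hbdef]; positivity
  have hfb : ∀ x, -b < f x ∧ f x < b := by
    intro x
    have h1 : |f x| ≤ ‖f‖ := by
      have := f.norm_coe_le_norm x
      simpa [Real.norm_eq_abs] using this
    have h2 := abs_le.1 h1
    constructor
    · rw [hbdef]; linarith [h2.1]
    · rw [hbdef]; linarith [h2.2]
  suffices key : ∀ ε : ℝ, 0 < ε → ε ≤ 1 →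
      ℓ f ≤ ∫ x, f x ∂(rmkMeasure hpos) + ε * (2*T + 2*b + 1) by
    refine le_of_forall_pos_le_add (fun ε' hε' => ?_)
    set D : ℝ := 2*T + 2*b + 1 with hDdef
    have hD : 0 < D := by rw [hDdef]; positivity
    have h := key (min 1 (ε'/D)) (lt_min one_pos (div_pos hε' hD)) (min_le_left _ _)
    have h2 : min 1 (ε'/D) * D ≤ (ε'/D) * D :=
      mul_le_mul_of_nonneg_right (min_le_right _ _) hD.le
    rw [div_mul_cancel₀ _ hD.ne'] at h2
    linarith
  intro ε hε hε1
  -- choose the number of subdivision levels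
  obtain ⟨n, hn0, hΔε⟩ : ∃ n : ℕ, 0 < n ∧ 2*b/(n:ℝ) ≤ ε := by
    obtain ⟨n, hn⟩ := exists_nat_gt (2*b/ε)
    refine ⟨n+1, Nat.succ_pos _, ?_⟩
    have hn1 : (0:ℝ) < (n:ℝ)+1 := by positivity
    rw [div_le_iff₀ (by exact_mod_cast hn1)]
    rw [div_lt_iff₀ hε] at hn
    have : ((n+1 : ℕ):ℝ) = (n:ℝ) + 1 := by push_cast; ring
    rw [this]
    nlinarith
  have hn0' : (0:ℝ) < (n:ℝ) := by exact_mod_cast hn0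
  set Δ : ℝ := 2*b/(n:ℝ) with hΔdef
  have hΔ0 : 0 < Δ := by rw [hΔdef]; positivity
  set y : ℕ → ℝ := fun i => -b + i * Δ with hydef
  have hyn : y n = b := by
    simp only [hydef, hΔdef]
    field_simp
    ring
  have hymono : ∀ ⦃i j : ℕ⦄, i ≤ j → y i ≤ y j := by
    intro i j hij
    simp only [hydef]
    have h : (i:ℝ) ≤ j := Nat.cast_le.2 hij
    nlinarith
  set E : ℕ → Set X := fun i => ⇑f ⁻¹' (Set.Ioc (y i) (y (i+1))) with hEdef
  have hEmeas : ∀ i, MeasurableSet (E i) :=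
    fun i => measurableSet_Ioc.preimage f.continuous.measurable
  have hmemE : ∀ i x, x ∈ E i ↔ (y i < f x ∧ f x ≤ y (i+1)) := by
    intro i x
    simp [hEdef, Set.mem_preimage, Set.mem_Ioc]
  have hcover : ∀ x, ∃ j : ℕ, j < n ∧ x ∈ E j := by
    intro x
    have hP0 : y 0 < f x := by
      simp only [hydef, Nat.cast_zero, zero_mul, add_zero]
      exact (hfb x).1
    have hPn : ¬ (y n < f x) := by
      rw [hyn]
      exact not_lt.2 (hfb x).2.le
    have hPj : y (Nat.findGreatest (fun i => y i < f x) n) < f x :=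
      Nat.findGreatest_spec (P := fun i => y i < f x) (Nat.zero_le n) hP0
    have hjn : Nat.findGreatest (fun i => y i < f x) n ≤ n := Nat.findGreatest_le n
    have hjlt : Nat.findGreatest (fun i => y i < f x) n < n := by
      rcases lt_or_eq_of_le hjn with h | h
      · exact h
      · exact absurd (h ▸ hPj) hPn
    have hnot : ¬ (y (Nat.findGreatest (fun i => y i < f x) n + 1) < f x) :=
      Nat.findGreatest_is_greatest (Nat.lt_succ_self _) hjlt
    exact ⟨Nat.findGreatest (fun i => y i < f x) n, hjlt,
      (hmemE _ x).2 ⟨hPj, not_lt.1 hnot⟩⟩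
  have hdisj : ∀ i j : ℕ, i < j → ∀ x, x ∈ E i → x ∈ E j → False := by
    intro i j hij x hxi hxj
    have h1 := ((hmemE i x).1 hxi).2
    have h2 := ((hmemE j x).1 hxj).1
    have h3 : y (i+1) ≤ y j := hymono hij
    linarith
  -- choose open sets V i with E i ⊆ V i, controlled measure, and f < y (i+1) + ε on V i
  have hVex : ∀ i : ℕ, ∃ V : Set X, IsOpen V ∧ E i ⊆ V ∧
      V ⊆ ⇑f ⁻¹' (Set.Iio (y (i+1) + ε)) ∧
      rmkMeasure hpos V ≤ rmkMeasure hpos (E i) + ENNReal.ofReal (ε/n) := by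
    intro i
    have hW : IsOpen (⇑f ⁻¹' (Set.Iio (y (i+1) + ε))) :=
      isOpen_Iio.preimage f.continuous
    have hEW : E i ⊆ ⇑f ⁻¹' (Set.Iio (y (i+1) + ε)) := by
      intro x hx
      have := ((hmemE i x).1 hx).2
      simp only [Set.mem_preimage, Set.mem_Iio]
      linarith
    have hne : ENNReal.ofReal (ε/n) ≠ 0 := by
      simp only [ne_eq, ENNReal.ofReal_eq_zero, not_le]
      positivity
    exact rmk_exists_open hpos hW hEW hne
  choose V hVo hEV hVW hVm using hVex
  -- partition of unity subordinate to the V i, i < n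
  have hVcover : Set.univ ⊆ ⋃ i : Fin n, V (i:ℕ) := by
    intro x _
    obtain ⟨j, hjn, hxj⟩ := hcover x
    exact Set.mem_iUnion.2 ⟨⟨j, hjn⟩, hEV j hxj⟩
  obtain ⟨ρ, hρsub⟩ := PartitionOfUnity.exists_isSubordinate isClosed_univ
    (fun i : Fin n => V (i:ℕ)) (fun i => hVo _) hVcover
  have hsum1 : ∀ x, ∑ i : Fin n, ρ i x = 1 := by
    intro x
    have := ρ.sum_eq_one (Set.mem_univ x)
    rwa [finsum_eq_sum_of_fintype] at this
  -- decomposition of f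
  have hfdecomp : f = ∑ i : Fin n, (ρ i : C(X, ℝ)) * f := by
    ext x
    rw [ContinuousMap.sum_apply]
    simp only [ContinuousMap.mul_apply]
    rw [← Finset.sum_mul, hsum1, one_mul]
  set c : Fin n → ℝ := fun i => y ((i:ℕ)+1) + ε with hcdef
  set a : Fin n → ℝ := fun i => ℓ (ρ i) with hadef
  have ha0 : ∀ i, 0 ≤ a i := fun i => hpos _ (fun x => ρ.nonneg i x)
  set m : Fin n → ℝ := fun i => (rmkMeasure hpos (E (i:ℕ))).toReal with hmdef
  have hm0 : ∀ i, 0 ≤ m i := fun i => ENNReal.toReal_nonneg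
  -- ℓ (ρ i * f) ≤ c i * a i
  have hstep : ∀ i : Fin n, ℓ ((ρ i : C(X, ℝ)) * f) ≤ c i * a i := by
    intro i
    have hpt : ∀ x, ((ρ i : C(X, ℝ)) * f) x ≤ (c i • (ρ i : C(X, ℝ))) x := by
      intro x
      simp only [ContinuousMap.mul_apply, ContinuousMap.smul_apply, smul_eq_mul]
      by_cases hx : ρ i x = 0
      · simp [hx]
      · have hxs : x ∈ tsupport (ρ i) := subset_closure (by simpa [Function.mem_support] using hx)
        have hxV : x ∈ V (i:ℕ) := hρsub i hxs
        have hxW := hVW (i:ℕ) hxV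
        simp only [Set.mem_preimage, Set.mem_Iio] at hxW
        have hρ0 : 0 ≤ ρ i x := ρ.nonneg i x
        have : f x ≤ c i := by rw [hcdef]; exact hxW.le
        calc ρ i x * f x ≤ ρ i x * c i := mul_le_mul_of_nonneg_left this hρ0
          _ = c i * ρ i x := mul_comm _ _
    calc ℓ ((ρ i : C(X, ℝ)) * f) ≤ ℓ (c i • (ρ i : C(X, ℝ))) := ell_mono hpos hpt
      _ = c i * a i := by rw [_root_.map_smul, smul_eq_mul, hadef]
  have hℓf : ℓ f ≤ ∑ i : Fin n, c i * a i := by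
    calc ℓ f = ℓ (∑ i : Fin n, (ρ i : C(X, ℝ)) * f) := by rw [← hfdecomp]
      _ = ∑ i : Fin n, ℓ ((ρ i : C(X, ℝ)) * f) := map_sum ℓ _ _
      _ ≤ ∑ i : Fin n, c i * a i := Finset.sum_le_sum (fun i _ => hstep i)
  -- bounds on a i
  have ham : ∀ i : Fin n, a i ≤ m i + ε/n := by
    intro i
    have h1 : a i ≤ (rmkMeasure hpos (V (i:ℕ))).toReal :=
      ell_le_rmk_open hpos (fun x => ρ.nonneg i x) (fun x => ρ.le_one i x)
        (hVo (i:ℕ)) (hρsub i)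
    have h2 : (rmkMeasure hpos (V (i:ℕ))).toReal ≤ m i + ε/n := by
      have h3 := hVm (i:ℕ)
      have h4 : (rmkMeasure hpos (E (i:ℕ)) + ENNReal.ofReal (ε/n)).toReal
          = m i + ε/n := by
        rw [ENNReal.toReal_add (rmk_ne_top hpos _) ENNReal.ofReal_ne_top,
          ENNReal.toReal_ofReal (by positivity : (0:ℝ) ≤ ε/n)]
      have h5 := ENNReal.toReal_mono (by
        rw [← h4] at *
        exact ENNReal.add_ne_top.2 ⟨rmk_ne_top hpos _, ENNReal.ofReal_ne_top⟩) h3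
      rw [h4] at h5
      exact h5
    exact h1.trans h2
  -- T ≤ ∑ a i
  have hsuma : T ≤ ∑ i : Fin n, a i := by
    have hmem : (∑ i : Fin n, (ρ i : C(X, ℝ))) ∈ testSet (Set.univ : Set X) := by
      constructor
      · intro x
        rw [ContinuousMap.sum_apply]
        exact Finset.sum_nonneg (fun i _ => ρ.nonneg i x)
      · intro x _
        rw [ContinuousMap.sum_apply, hsum1]
    calc T = rc ℓ Set.univ := rmk_univ_toReal hpos
      _ ≤ ℓ (∑ i : Fin n, (ρ i : C(X, ℝ))) := rc_le hpos hmem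
      _ = ∑ i : Fin n, a i := map_sum ℓ _ _
  -- ∑ m i = T
  have hsumm : ∑ i : Fin n, m i = T := by
    have hU : (⋃ i : Fin n, E (i:ℕ)) = Set.univ := by
      apply Set.eq_univ_of_forall
      intro x
      obtain ⟨j, hjn, hxj⟩ := hcover x
      exact Set.mem_iUnion.2 ⟨⟨j, hjn⟩, hxj⟩
    have hpair : Pairwise (Function.onFun Disjoint (fun i : Fin n => E (i:ℕ))) := by
      intro i j hij
      rw [Function.onFun]
      rw [Set.disjoint_left]
      intro x hxi hxj
      rcases lt_or_gt_of_ne (fun h : (i:ℕ) = (j:ℕ) => hij (Fin.ext h)) with h | h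
      · exact hdisj _ _ h x hxi hxj
      · exact hdisj _ _ h x hxj hxi
    have := measure_iUnion (μ := rmkMeasure hpos) hpair (fun i => hEmeas _)
    rw [hU, tsum_fintype] at this
    rw [hmdef, hTdef, this, ENNReal.toReal_sum (fun i _ => rmk_ne_top hpos _)]
  -- c i + b bounds
  have hcb : ∀ i : Fin n, 0 ≤ c i + b ∧ c i + b ≤ 2*b + ε := by
    intro i
    have hin : (i:ℕ) + 1 ≤ n := i.2
    have hin' : ((i:ℕ):ℝ) + 1 ≤ (n:ℝ) := by exact_mod_cast hin
    have hci : c i + b = (((i:ℕ):ℝ)+1) * Δ + ε := by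
      simp only [hcdef, hydef]
      push_cast
      ring
    constructor
    · rw [hci]
      have : (0:ℝ) ≤ (((i:ℕ):ℝ)+1) := by positivity
      nlinarith
    · rw [hci]
      have h1 : (((i:ℕ):ℝ)+1) * Δ ≤ (n:ℝ) * Δ := mul_le_mul_of_nonneg_right hin' hΔ0.le
      have h2 : (n:ℝ) * Δ = 2*b := by
        rw [hΔdef]; field_simp
      linarith
  -- main summation estimate
  have hmain : ∑ i : Fin n, c i * a i ≤ ∑ i : Fin n, c i * m i + (2*b + ε) * ε := by
    have e1 : ∀ i : Fin n, c i * a i = (c i + b) * a i - b * a i := by intro i; ring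
    have e2 : ∀ i : Fin n, (c i + b) * a i ≤ (c i + b) * (m i + ε/n) :=
      fun i => mul_le_mul_of_nonneg_left (ham i) (hcb i).1
    have e3 : ∀ i : Fin n, (c i + b) * (m i + ε/n) ≤ (c i + b) * m i + (2*b+ε) * (ε/n) := by
      intro i
      have h1 : (c i + b) * (m i + ε/n) = (c i + b) * m i + (c i + b) * (ε/n) := by ring
      have h2 : (c i + b) * (ε/n) ≤ (2*b+ε) * (ε/n) :=
        mul_le_mul_of_nonneg_right (hcb i).2 (by positivity)
      linarith
    have e4 : ∑ i : Fin n, c i * a i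
        = ∑ i : Fin n, (c i + b) * a i - b * ∑ i : Fin n, a i := by
      rw [Finset.mul_sum, ← Finset.sum_sub_distrib]
      exact Finset.sum_congr rfl (fun i _ => e1 i)
    have e5 : ∑ i : Fin n, (c i + b) * a i
        ≤ ∑ i : Fin n, ((c i + b) * m i + (2*b+ε) * (ε/n)) :=
      Finset.sum_le_sum (fun i _ => (e2 i).trans (e3 i))
    have e6 : ∑ i : Fin n, ((c i + b) * m i + (2*b+ε) * (ε/n))
        = ∑ i : Fin n, (c i + b) * m i + (n:ℝ) * ((2*b+ε) * (ε/n)) := by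
      rw [Finset.sum_add_distrib, Finset.sum_const, Finset.card_univ, Fintype.card_fin]
      all_goals rw [nsmul_eq_mul]
    have e7 : (n:ℝ) * ((2*b+ε) * (ε/n)) = (2*b+ε) * ε := by
      field_simp
    have e8 : ∑ i : Fin n, (c i + b) * m i = ∑ i : Fin n, c i * m i + b * T := by
      have h1 : ∑ i : Fin n, (c i + b) * m i = ∑ i : Fin n, (c i * m i + b * m i) :=
        Finset.sum_congr rfl (fun i _ => by ring)
      rw [h1, Finset.sum_add_distrib, ← Finset.mul_sum, hsumm]
    have e9 : b * T ≤ b * ∑ i : Fin n, a i := mul_le_mul_of_nonneg_left hsuma hb0.le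
    rw [e4]
    rw [e6, e7, e8] at e5
    linarith
  -- ∑ c i * m i ≤ ∫ f + (Δ + ε) * T
  have hint : ∑ i : Fin n, c i * m i ≤ (∫ x, f x ∂(rmkMeasure hpos)) + (Δ + ε) * T := by
    set s : X → ℝ := fun x => ∑ i : Fin n, (E (i:ℕ)).indicator (fun _ => c i) x with hsdef
    have hs_int : Integrable s (rmkMeasure hpos) := by
      apply integrable_finset_sum
      intro i _
      exact (integrable_const (c i)).indicator (hEmeas _)
    have hs_eq : ∫ x, s x ∂(rmkMeasure hpos) = ∑ i : Fin n, c i * m i := by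
      simp only [hsdef]
      rw [integral_finset_sum _ (fun i _ => (integrable_const (c i)).indicator (hEmeas _))]
      refine Finset.sum_congr rfl (fun i _ => ?_)
      rw [integral_indicator_const (c i) (hEmeas _)]
      rw [smul_eq_mul, mul_comm]
      rfl
    have hsle : ∀ x, s x ≤ f x + (Δ + ε) := by
      intro x
      obtain ⟨j, hjn, hxj⟩ := hcover x
      have hval : s x = c ⟨j, hjn⟩ := by
        simp only [hsdef]
        rw [Finset.sum_eq_single (⟨j, hjn⟩ : Fin n)]
        · rw [Set.indicator_of_mem hxj]
        · intro i _ hij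
          apply Set.indicator_of_notMem
          intro hxi
          rcases lt_or_gt_of_ne (fun h : (i:ℕ) = j => hij (Fin.ext h)) with h | h
          · exact hdisj _ _ h x hxi hxj
          · exact hdisj _ _ h x hxj hxi
        · intro h
          exact absurd (Finset.mem_univ _) h
      rw [hval]
      have h1 : y j < f x := ((hmemE j x).1 hxj).1
      have h2 : y (j+1) = y j + Δ := by
        simp only [hydef]
        push_cast
        ring
      simp only [hcdef]
      rw [h2]
      linarith
    have hfint : Integrable (fun x => f x + (Δ + ε)) (rmkMeasure hpos) :=
      (cont_integrable hpos f).add (integrable_const _)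
    have h3 : ∫ x, s x ∂(rmkMeasure hpos) ≤ ∫ x, (f x + (Δ + ε)) ∂(rmkMeasure hpos) :=
      integral_mono hs_int hfint hsle
    rw [hs_eq] at h3
    rw [integral_add (cont_integrable hpos f) (integrable_const _), integral_const,
      smul_eq_mul] at h3
    rw [measureReal_def, ← hTdef] at h3
    linarith
  -- conclude
  have hΔT : (Δ + ε) * T ≤ 2 * ε * T := by nlinarith
  have hbe : (2*b + ε) * ε ≤ (2*b + 1) * ε := by nlinarith
  calc ℓ f ≤ ∑ i : Fin n, c i * a i := hℓf
    _ ≤ ∑ i : Fin n, c i * m i + (2*b + ε) * ε := hmain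
    _ ≤ (∫ x, f x ∂(rmkMeasure hpos)) + (Δ + ε) * T + (2*b + ε) * ε := by linarith
    _ ≤ (∫ x, f x ∂(rmkMeasure hpos)) + ε * (2*T + 2*b + 1) := by nlinarith

lemma integral_rmk (f : C(X, ℝ)) : ∫ x, f x ∂(rmkMeasure hpos) = ℓ f := by
  refine le_antisymm ?_ (ell_le_integral hpos f)
  have h := ell_le_integral hpos (-f)
  rw [map_neg] at h
  have hint : ∫ x, (-f) x ∂(rmkMeasure hpos) = - ∫ x, f x ∂(rmkMeasure hpos) := by
    simp only [ContinuousMap.neg_apply]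
    rw [integral_neg]
  rw [hint] at h
  linarith

end meas

end RMKaux

open RMKaux in
/-- Hahn–Banach: a dominated linear functional touching `μ` at `φ`. -/
lemma exists_dominated_linear {X : Type*} [TopologicalSpace X] [CompactSpace X]
    (μ : C(X, ℝ) → ℝ)
    (hadd : ∀ φ ψ : C(X, ℝ), μ (φ + ψ) ≤ μ φ + μ ψ)
    (hhom : ∀ c : ℝ, 0 ≤ c → ∀ φ : C(X, ℝ), μ (c • φ) = c * μ φ)
    (φ : C(X, ℝ)) :
    ∃ ℓ : C(X, ℝ) →ₗ[ℝ] ℝ, (∀ ψ, ℓ ψ ≤ μ ψ) ∧ ℓ φ = μ φ := by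
  have h0 : μ 0 = 0 := by
    have := hhom 0 le_rfl 0
    simpa using this
  have hkey : ∀ (t : ℝ) (ψ : C(X, ℝ)), t * μ ψ ≤ μ (t • ψ) := by
    intro t ψ
    rcases le_or_gt 0 t with ht | ht
    · exact (hhom t ht ψ).symm.le
    · have h1 : μ (t • ψ + (-t) • ψ) ≤ μ (t • ψ) + μ ((-t) • ψ) := hadd _ _
      have h2 : t • ψ + (-t) • ψ = 0 := by
        rw [← add_smul]
        simp
      rw [h2, h0, hhom (-t) (by linarith) ψ] at h1
      linarith
  have main : ∀ ψ₀ : C(X, ℝ), ψ₀ ≠ 0 →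
      ∃ ℓ : C(X, ℝ) →ₗ[ℝ] ℝ, (∀ ψ, ℓ ψ ≤ μ ψ) ∧ ℓ ψ₀ = μ ψ₀ := by
    intro ψ₀ hψ₀
    set f := (LinearPMap.mkSpanSingleton (K := ℝ) ψ₀ (μ ψ₀) hψ₀ : C(X, ℝ) →ₗ.[ℝ] ℝ) with hf
    have hfle : ∀ x : f.domain, f x ≤ μ x := by
      rintro ⟨v, hv⟩
      rcases Submodule.mem_span_singleton.1 hv with ⟨t, rfl⟩
      have happ : f ⟨t • ψ₀, hv⟩ = t • (μ ψ₀) :=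
        LinearPMap.mkSpanSingleton'_apply ψ₀ (μ ψ₀) _ t hv
      rw [happ, smul_eq_mul]
      exact hkey t ψ₀
    obtain ⟨g, hgeq, hgle⟩ := exists_extension_of_le_sublinear f μ
      (fun c hc ψ => hhom c hc.le ψ) hadd hfle
    refine ⟨g, hgle, le_antisymm (hgle ψ₀) ?_⟩
    have h1 : g ψ₀ = f ⟨ψ₀, Submodule.mem_span_singleton_self ψ₀⟩ :=
      hgeq ⟨ψ₀, Submodule.mem_span_singleton_self ψ₀⟩
    have h2 : f ⟨ψ₀, Submodule.mem_span_singleton_self ψ₀⟩ = μ ψ₀ :=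
      LinearPMap.mkSpanSingleton_apply ℝ ℝ hψ₀ (μ ψ₀)
    rw [h1, h2]
  by_cases hφ : φ = 0
  · subst hφ
    rcases subsingleton_or_nontrivial C(X, ℝ) with hs | hn
    · refine ⟨0, fun ψ => ?_, by simp [h0]⟩
      have hψ : ψ = 0 := Subsingleton.elim _ _
      simp [hψ, h0]
    · obtain ⟨ψ₀, hψ₀⟩ := exists_ne (0 : C(X, ℝ))
      obtain ⟨ℓ, hle, _⟩ := main ψ₀ hψ₀
      exact ⟨ℓ, hle, by simp [h0]⟩
  · exact main φ hφ

/-- A functional on `C(X, ℝ)` is a positive strong submeasure iff it is the pointwise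
supremum of a nonempty collection of finite positive Borel measures of uniformly
bounded masses. -/
theorem positiveStrongSubmeasure_iff_sup_of_measures {X : Type*} [MetricSpace X]
    [CompactSpace X] [MeasurableSpace X] [BorelSpace X] (μ : C(X, ℝ) → ℝ) :
    (IsStrongSubmeasure μ ∧ Monotone μ) ↔
      ∃ G : Set (Measure X), G.Nonempty ∧ (∀ χ ∈ G, IsFiniteMeasure χ) ∧
        (∃ M : ℝ, ∀ χ ∈ G, (χ Set.univ).toReal ≤ M) ∧
        ∀ φ : C(X, ℝ), μ φ = sSup {c : ℝ | ∃ χ ∈ G, ∫ x, φ x ∂χ = c} := by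
  constructor
  · rintro ⟨⟨hadd, hhom, _⟩, hmono⟩
    have h0 : μ 0 = 0 := by
      have := hhom 0 le_rfl 0
      simpa using this
    set G : Set (Measure X) :=
      {χ | IsFiniteMeasure χ ∧ ∀ ψ : C(X, ℝ), ∫ x, ψ x ∂χ ≤ μ ψ} with hG
    have hget : ∀ φ : C(X, ℝ), ∃ χ ∈ G, ∫ x, φ x ∂χ = μ φ := by
      intro φ
      obtain ⟨ℓ, hle, hφeq⟩ := exists_dominated_linear μ hadd hhom φ
      have hpos : ∀ f : C(X, ℝ), (∀ x, 0 ≤ f x) → 0 ≤ ℓ f := by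
        intro f hf
        have h1 : ℓ (-f) ≤ μ (-f) := hle (-f)
        have h2 : μ (-f) ≤ μ 0 := hmono (by
          intro x
          simpa using hf x)
        rw [map_neg] at h1
        rw [h0] at h2
        linarith
      refine ⟨RMKaux.rmkMeasure hpos, ⟨RMKaux.rmk_finite hpos, fun ψ => ?_⟩, ?_⟩
      · rw [RMKaux.integral_rmk hpos ψ]
        exact hle ψ
      · rw [RMKaux.integral_rmk hpos φ, hφeq]
    obtain ⟨χ₀, hχ₀, _⟩ := hget 0
    refine ⟨G, ⟨χ₀, hχ₀⟩, fun χ hχ => hχ.1, ⟨μ 1, fun χ hχ => ?_⟩, fun φ => ?_⟩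
    · haveI := hχ.1
      have h1 : ∫ x, (1 : C(X, ℝ)) x ∂χ ≤ μ 1 := hχ.2 1
      have h2 : ∫ x, (1 : C(X, ℝ)) x ∂χ = (χ Set.univ).toReal := by
        simp
        rfl
      rw [h2] at h1
      exact h1
    · obtain ⟨χφ, hχφ, hint⟩ := hget φ
      have hub : ∀ c ∈ {c : ℝ | ∃ χ ∈ G, ∫ x, φ x ∂χ = c}, c ≤ μ φ := by
        rintro c ⟨χ, hχ, rfl⟩
        exact hχ.2 φ
      have hmem : μ φ ∈ {c : ℝ | ∃ χ ∈ G, ∫ x, φ x ∂χ = c} := ⟨χφ, hχφ, hint⟩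
      exact le_antisymm (le_csSup ⟨μ φ, hub⟩ hmem) (csSup_le ⟨μ φ, hmem⟩ hub)
  · rintro ⟨G, ⟨χ₀, hχ₀⟩, hfin, ⟨M, hM⟩, hsup⟩
    have hintg : ∀ χ ∈ G, ∀ φ : C(X, ℝ), Integrable (fun x => φ x) χ := by
      intro χ hχ φ
      haveI := hfin χ hχ
      exact (BoundedContinuousFunction.mkOfCompact φ).integrable χ
    have hM0 : 0 ≤ M := le_trans ENNReal.toReal_nonneg (hM χ₀ hχ₀)
    have habs : ∀ χ ∈ G, ∀ φ : C(X, ℝ), |∫ x, φ x ∂χ| ≤ M * ‖φ‖ := by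
      intro χ hχ φ
      haveI := hfin χ hχ
      have h1 : ‖∫ x, φ x ∂χ‖ ≤ ‖φ‖ * (χ Set.univ).toReal :=
        norm_integral_le_of_norm_le_const
          (Filter.Eventually.of_forall (fun x => φ.norm_coe_le_norm x))
      rw [Real.norm_eq_abs] at h1
      have h2 : ‖φ‖ * (χ Set.univ).toReal ≤ ‖φ‖ * M :=
        mul_le_mul_of_nonneg_left (hM χ hχ) (norm_nonneg φ)
      calc |∫ x, φ x ∂χ| ≤ ‖φ‖ * M := h1.trans h2
        _ = M * ‖φ‖ := mul_comm _ _
    have hbd : ∀ φ : C(X, ℝ), ∀ c ∈ {c : ℝ | ∃ χ ∈ G, ∫ x, φ x ∂χ = c}, c ≤ M * ‖φ‖ := by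
      rintro φ c ⟨χ, hχ, rfl⟩
      exact (le_abs_self _).trans (habs χ hχ φ)
    have hne : ∀ φ : C(X, ℝ), ({c : ℝ | ∃ χ ∈ G, ∫ x, φ x ∂χ = c}).Nonempty :=
      fun φ => ⟨_, χ₀, hχ₀, rfl⟩
    have hbdd : ∀ φ : C(X, ℝ), BddAbove {c : ℝ | ∃ χ ∈ G, ∫ x, φ x ∂χ = c} :=
      fun φ => ⟨M * ‖φ‖, hbd φ⟩
    have he : ∀ (c : ℝ) (φ : C(X, ℝ)) (χ : Measure X), χ ∈ G →
        ∫ x, (c • φ) x ∂χ = c * ∫ x, φ x ∂χ := by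
      intro c φ χ hχ
      simp only [ContinuousMap.smul_apply, smul_eq_mul]
      exact integral_const_mul c _
    refine ⟨⟨fun φ ψ => ?_, fun c hc φ => ?_, ⟨M + 1, by linarith, fun φ => ?_⟩⟩,
      fun φ ψ hφψ => ?_⟩
    · -- subadditivity
      rw [hsup (φ + ψ), hsup φ, hsup ψ]
      refine csSup_le (hne _) ?_
      rintro c ⟨χ, hχ, rfl⟩
      haveI := hfin χ hχ
      have e : ∫ x, (φ + ψ) x ∂χ = (∫ x, φ x ∂χ) + ∫ x, ψ x ∂χ := by
        simp only [ContinuousMap.add_apply]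
        exact integral_add (hintg χ hχ φ) (hintg χ hχ ψ)
      rw [e]
      exact add_le_add (le_csSup (hbdd φ) ⟨χ, hχ, rfl⟩) (le_csSup (hbdd ψ) ⟨χ, hχ, rfl⟩)
    · -- homogeneity
      rw [hsup (c • φ), hsup φ]
      rcases eq_or_lt_of_le hc with rfl | hc0
      · have hset : {d : ℝ | ∃ χ ∈ G, ∫ x, ((0:ℝ) • φ) x ∂χ = d} = {(0:ℝ)} := by
          ext d
          constructor
          · rintro ⟨χ, hχ, rfl⟩
            simp [he 0 φ χ hχ]
          · rintro rfl
            exact ⟨χ₀, hχ₀, by simp [he 0 φ χ₀ hχ₀]⟩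
        rw [hset, csSup_singleton, zero_mul]
      · apply le_antisymm
        · refine csSup_le (hne _) ?_
          rintro d ⟨χ, hχ, rfl⟩
          rw [he c φ χ hχ]
          exact mul_le_mul_of_nonneg_left (le_csSup (hbdd φ) ⟨χ, hχ, rfl⟩) hc
        · have h1 : sSup {d : ℝ | ∃ χ ∈ G, ∫ x, φ x ∂χ = d} ≤
              (sSup {d : ℝ | ∃ χ ∈ G, ∫ x, (c • φ) x ∂χ = d}) / c := by
            refine csSup_le (hne φ) ?_
            rintro a ⟨χ, hχ, rfl⟩
            rw [le_div_iff₀ hc0]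
            have h2 : (∫ x, φ x ∂χ) * c = ∫ x, (c • φ) x ∂χ := by
              rw [he c φ χ hχ]
              ring
            rw [h2]
            exact le_csSup (hbdd (c • φ)) ⟨χ, hχ, rfl⟩
          have h3 := mul_le_mul_of_nonneg_left h1 hc
          calc c * sSup {d : ℝ | ∃ χ ∈ G, ∫ x, φ x ∂χ = d}
              ≤ c * (sSup {d : ℝ | ∃ χ ∈ G, ∫ x, (c • φ) x ∂χ = d} / c) := h3
            _ = sSup {d : ℝ | ∃ χ ∈ G, ∫ x, (c • φ) x ∂χ = d} := by
              field_simp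
    · -- boundedness
      rw [hsup φ]
      rw [abs_le]
      have hnn : 0 ≤ ‖φ‖ := norm_nonneg φ
      constructor
      · have h1 : -(M * ‖φ‖) ≤ ∫ x, φ x ∂χ₀ := neg_le_of_abs_le (habs χ₀ hχ₀ φ)
        have h2 : (∫ x, φ x ∂χ₀) ≤ sSup {c : ℝ | ∃ χ ∈ G, ∫ x, φ x ∂χ = c} :=
          le_csSup (hbdd φ) ⟨χ₀, hχ₀, rfl⟩
        nlinarith
      · have h1 : sSup {c : ℝ | ∃ χ ∈ G, ∫ x, φ x ∂χ = c} ≤ M * ‖φ‖ :=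
          csSup_le (hne φ) (hbd φ)
        nlinarith
    · -- monotonicity
      rw [hsup φ, hsup ψ]
      refine csSup_le (hne φ) ?_
      rintro c ⟨χ, hχ, rfl⟩
      refine le_trans ?_ (le_csSup (hbdd ψ) ⟨χ, hχ, rfl⟩)
      haveI := hfin χ hχ
      exact integral_mono (hintg χ hχ φ) (hintg χ hχ ψ) (fun x => hφψ x)
end

section
/- Weak compactness of strong submeasures: if μ₁, μ₂, … is a sequence of strong submeasures on X with sup_n ‖μ_n‖ < ∞, then there is a subsequence μ_{n(k)} and a strong submeasure μ such that μ_{n(k)}(φ) → μ(φ) for every φ ∈ C⁰(X). If moreover each μ_n is positive, then so is μ. -/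
open Filter Topology

/-- Weak compactness of strong submeasures: any sequence of strong submeasures with
uniformly bounded norms has a weakly convergent subsequence, whose limit is a strong
submeasure; if moreover all members of the sequence are positive, so is the limit. -/
theorem strongSubmeasure_weak_compactness {X : Type*} [MetricSpace X] [CompactSpace X]
    (μs : ℕ → C(X, ℝ) → ℝ) (h : ∀ k, IsStrongSubmeasure (μs k))
    (C : ℝ) (hC : ∀ k (φ : C(X, ℝ)), |μs k φ| ≤ C * ‖φ‖) :
    ∃ n : ℕ → ℕ, StrictMono n ∧ ∃ μ : C(X, ℝ) → ℝ, IsStrongSubmeasure μ ∧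
      (∀ φ : C(X, ℝ), Tendsto (fun k => μs (n k) φ) atTop (𝓝 (μ φ))) ∧
      ((∀ k, Monotone (μs k)) → Monotone μ) := by
  set C₀ : ℝ := max C 0 with hC₀def
  have hC₀nn : 0 ≤ C₀ := le_max_right _ _
  have hC₀ : ∀ k (φ : C(X, ℝ)), |μs k φ| ≤ C₀ * ‖φ‖ := fun k φ =>
    (hC k φ).trans (mul_le_mul_of_nonneg_right (le_max_left _ _) (norm_nonneg _))
  -- uniform Lipschitz estimate
  have hlip : ∀ k (φ ψ : C(X, ℝ)), |μs k φ - μs k ψ| ≤ C₀ * ‖φ - ψ‖ := by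
    intro k φ ψ
    have key : ∀ a b : C(X, ℝ), μs k a - μs k b ≤ C₀ * ‖a - b‖ := by
      intro a b
      have h1 := (h k).1 b (a - b)
      simp only [add_sub_cancel] at h1
      have h2 : μs k (a - b) ≤ C₀ * ‖a - b‖ := (le_abs_self _).trans (hC₀ k _)
      linarith
    have h1 := key φ ψ
    have h2 := key ψ φ
    rw [← norm_neg, neg_sub] at h2
    exact abs_le.mpr ⟨by linarith, h1⟩
  -- dense sequence in C(X, ℝ)
  obtain ⟨e, he⟩ := TopologicalSpace.exists_dense_seq C(X, ℝ)
  -- compactness in the product space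
  have hcpt : IsCompact (Set.pi Set.univ fun i => Metric.closedBall (0 : ℝ) (C₀ * ‖e i‖)) :=
    isCompact_univ_pi fun i => isCompact_closedBall _ _
  have hmem : ∀ k, (fun i => μs k (e i)) ∈ Set.pi Set.univ
      (fun i => Metric.closedBall (0 : ℝ) (C₀ * ‖e i‖)) := by
    intro k i _
    simpa [Real.dist_eq] using hC₀ k (e i)
  obtain ⟨L, _, n, hn, hLtend⟩ := hcpt.tendsto_subseq hmem
  have hLe : ∀ i, Tendsto (fun k => μs (n k) (e i)) atTop (𝓝 (L i)) := by
    intro i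
    exact (tendsto_pi_nhds.mp hLtend) i
  refine ⟨n, hn, ?_⟩
  -- Cauchy on every φ
  have hcauchy : ∀ φ : C(X, ℝ), CauchySeq (fun k => μs (n k) φ) := by
    intro φ
    rw [Metric.cauchySeq_iff]
    intro ε hε
    have hδ : 0 < ε / (3 * (C₀ + 1)) := by positivity
    obtain ⟨i, hi⟩ := Metric.denseRange_iff.mp he φ _ hδ
    have hclose : C₀ * ‖φ - e i‖ ≤ ε / 3 := by
      have h1 : ‖φ - e i‖ ≤ ε / (3 * (C₀ + 1)) := by
        rw [← dist_eq_norm]; exact hi.le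
      have h2 : C₀ * ‖φ - e i‖ ≤ C₀ * (ε / (3 * (C₀ + 1))) :=
        mul_le_mul_of_nonneg_left h1 hC₀nn
      have h3 : C₀ * (ε / (3 * (C₀ + 1))) ≤ (C₀ + 1) * (ε / (3 * (C₀ + 1))) :=
        mul_le_mul_of_nonneg_right (by linarith) hδ.le
      have h4 : (C₀ + 1) * (ε / (3 * (C₀ + 1))) = ε / 3 := by
        field_simp
      linarith
    obtain ⟨N, hN⟩ := (Metric.cauchySeq_iff.mp (hLe i).cauchySeq) (ε / 3) (by linarith)
    refine ⟨N, fun m hm m' hm' => ?_⟩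
    have e1 := hlip (n m) φ (e i)
    have e2 := hlip (n m') φ (e i)
    have e3 := hN m hm m' hm'
    rw [Real.dist_eq] at e3 ⊢
    have : μs (n m) φ - μs (n m') φ =
        (μs (n m) φ - μs (n m) (e i)) + (μs (n m) (e i) - μs (n m') (e i))
          + (μs (n m') (e i) - μs (n m') φ) := by ring
    calc |μs (n m) φ - μs (n m') φ| ≤
        |μs (n m) φ - μs (n m) (e i)| + |μs (n m) (e i) - μs (n m') (e i)|
          + |μs (n m') (e i) - μs (n m') φ| := by
          rw [this]; exact (abs_add_le _ _).trans (by gcongr; exact abs_add_le _ _)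
      _ < ε := by
          rw [abs_sub_comm (μs (n m') (e i))] at *
          linarith
  have hconv : ∀ φ : C(X, ℝ), ∃ l, Tendsto (fun k => μs (n k) φ) atTop (𝓝 l) := fun φ =>
    cauchySeq_tendsto_of_complete (hcauchy φ)
  choose μ htend using hconv
  refine ⟨μ, ⟨?_, ?_, ⟨C₀ + 1, by positivity, ?_⟩⟩, htend, ?_⟩
  · intro φ ψ
    exact le_of_tendsto_of_tendsto' (htend (φ + ψ)) ((htend φ).add (htend ψ))
      fun k => (h (n k)).1 φ ψ
  · intro c hc φ
    have : Tendsto (fun k => μs (n k) (c • φ)) atTop (𝓝 (c * μ φ)) := by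
      have heq : (fun k => μs (n k) (c • φ)) = fun k => c * μs (n k) φ := by
        funext k; exact (h (n k)).2.1 c hc φ
      rw [heq]
      exact (htend φ).const_mul c
    exact tendsto_nhds_unique (htend (c • φ)) this
  · intro φ
    have h1 : |μ φ| ≤ C₀ * ‖φ‖ :=
      le_of_tendsto' (htend φ).abs fun k => hC₀ (n k) φ
    have : C₀ * ‖φ‖ ≤ (C₀ + 1) * ‖φ‖ :=
      mul_le_mul_of_nonneg_right (by linarith) (norm_nonneg _)
    linarith
  · intro hm φ ψ hφψ
    exact le_of_tendsto_of_tendsto' (htend φ) (htend ψ) fun k => hm (n k) hφψ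
end

section
/- Independence of the extension from the choice of dense open set: with X, U, E as above, if g : U → ℝ is bounded and continuous, U₁ ⊂ U is another open dense subset of X, and g₁ = g|_{U₁}, then E(g₁) = E(g) on all of X. -/
open Filter Topology
open scoped Classical

/-- The canonical extension of a function `g` from a dense open set `U` to `X`:
equal to `g` on `U`, and to `limsup_{y ∈ U, y → x} g(y)` outside `U`. -/
noncomputable def usce {X : Type*} [TopologicalSpace X] (U : Set X) (g : X → ℝ) : X → ℝ :=
  fun x => if x ∈ U then g x else Filter.limsup g (nhdsWithin x U)

/-! A limsup is determined by the set of eventual upper bounds. For `g` continuous on `U`, a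
closed constraint on `g` that holds on `W ∩ U₁` holds on all of `W ∩ U`, as `U₁` is dense, so
`𝓝[U₁] x` and `𝓝[U] x` have the same eventual upper bounds for `g`. -/

section

variable {X β : Type*} [TopologicalSpace X] [TopologicalSpace β] {U V : Set X} {g : X → β}

theorem eventually_nhdsWithin_mem_iff_of_subset_closure (hg : ContinuousOn g U)
    (hVU : V ⊆ U) (hUV : U ⊆ closure V) {C : Set β} (hC : IsClosed C) (x : X) :
    (∀ᶠ z in 𝓝[V] x, g z ∈ C) ↔ ∀ᶠ z in 𝓝[U] x, g z ∈ C := by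
  refine ⟨fun h => ?_, fun h => h.filter_mono (nhdsWithin_mono x hVU)⟩
  obtain ⟨W, hWC, hWo, hWx⟩ := eventually_nhdsWithin_iff.mp h |> eventually_nhds_iff.mp
  rw [eventually_nhdsWithin_iff, eventually_nhds_iff]
  refine ⟨W, fun y hyW hyU => ?_, hWo, hWx⟩
  have : (𝓝[V] y).NeBot := mem_closure_iff_nhdsWithin_neBot.mp (hUV hyU)
  refine hC.mem_of_tendsto ((hg y hyU).mono hVU) ?_
  filter_upwards [self_mem_nhdsWithin, mem_nhdsWithin_of_mem_nhds (hWo.mem_nhds hyW)]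
    with z hzV hzW using hWC z hzW hzV

theorem limsup_nhdsWithin_eq_of_subset_closure [ConditionallyCompleteLattice β]
    [ClosedIicTopology β] (hg : ContinuousOn g U) (hVU : V ⊆ U)
    (hUV : U ⊆ closure V) (x : X) :
    limsup g (𝓝[V] x) = limsup g (𝓝[U] x) := by
  simp only [limsup_eq]
  congr 1
  ext a
  exact eventually_nhdsWithin_mem_iff_of_subset_closure hg hVU hUV isClosed_Iic x

end

theorem usce_indep_of_dense_open_general {X : Type*} [MetricSpace X]
    (U U₁ : Set X) (hU₁d : Dense U₁)
    (hsub : U₁ ⊆ U) (g : X → ℝ)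
    (hcont : ContinuousOn g U) :
    ∀ x, usce U₁ g x = usce U g x := by
  intro x
  by_cases hx₁ : x ∈ U₁
  · simp only [usce, hx₁, hsub hx₁, if_true]
  by_cases hx : x ∈ U
  · have : (𝓝[U₁] x).NeBot := mem_closure_iff_nhdsWithin_neBot.mp (hU₁d x)
    simp only [usce, hx₁, hx, if_true, if_false, ((hcont x hx).mono hsub).limsup_eq]
  · simp only [usce, hx₁, hx, if_false]
    exact limsup_nhdsWithin_eq_of_subset_closure hcont hsub (fun y _ => hU₁d y) x

/-- Independence of the extension from the choice of dense open set: if `g` is bounded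
and continuous on a dense open set `U`, and `U₁ ⊆ U` is another dense open set, then the
extension computed from `U₁` (i.e. from `g|_{U₁}`) agrees with the extension computed
from `U` at every point of `X`. -/
theorem usce_indep_of_dense_open {X : Type*} [MetricSpace X] [CompactSpace X]
    (U U₁ : Set X) (hU : IsOpen U) (hUd : Dense U) (hU₁ : IsOpen U₁) (hU₁d : Dense U₁)
    (hsub : U₁ ⊆ U) (g : X → ℝ) (M : ℝ) (hb : ∀ x ∈ U, |g x| ≤ M)
    (hcont : ContinuousOn g U) :
    ∀ x, usce U₁ g x = usce U g x :=
  usce_indep_of_dense_open_general U U₁ hU₁d hsub g hcont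
end

section
/- Mass preservation under pushforward by a continuous open-dense defined map: let f : X ⇢ Y be continuous on a dense open set U ⊂ X, and let f_* be the induced pushforward on positive strong submeasures, f_*(μ)(φ) = inf{μ(ψ) : ψ ∈ C⁰(X), ψ ≥ f^*(φ)} where f^*(φ) is the USC extension of φ∘f from U. Then f_*(μ) is a positive strong submeasure on Y, f_*(μ)(±1) = μ(±1), and ‖f_*(μ)‖ = ‖μ‖. -/
open Filter Topology
open scoped Classical

/-- The upper-semicontinuous pullback `f^*(φ)` of a continuous function `φ` by a map `f`
continuous on the dense open set `U`: the USC extension of `φ ∘ f` from `U`. -/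
noncomputable def uscPullback {X Y : Type*} [TopologicalSpace X] [TopologicalSpace Y]
    (U : Set X) (f : X → Y) (φ : C(Y, ℝ)) : X → ℝ :=
  usce U (fun x => φ (f x))

/-- The pushforward `f_*(μ)` of a functional `μ` on `C(X, ℝ)` by a continuous
open-dense defined map: `f_*(μ)(φ) = inf {μ(ψ) : ψ ∈ C⁰(X), ψ ≥ f^*(φ)}`. -/
noncomputable def pushSM {X Y : Type*} [TopologicalSpace X] [CompactSpace X]
    [TopologicalSpace Y] [CompactSpace Y] (U : Set X) (f : X → Y)
    (μ : C(X, ℝ) → ℝ) (φ : C(Y, ℝ)) : ℝ :=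
  sInf {c : ℝ | ∃ ψ : C(X, ℝ), (∀ x, uscPullback U f φ x ≤ ψ x) ∧ μ ψ = c}

/-! Since `U` is dense, every point of `X` is a limit of points of `U`, so the
`limsup` defining `f^*` is taken along a non-trivial filter. Hence `φ ↦ f^*(φ)` is
monotone, subadditive, positively homogeneous and maps constants to the same constants;
taking infima over the continuous majorants, `f_*(μ)` inherits monotonicity and
sublinearity from `μ`, and `f_*(μ)(c) = μ(c)` for constants `c`. Finally, for a monotone,
positively homogeneous functional `ν`, the bounds `-‖φ‖ ≤ φ ≤ ‖φ‖` show that the best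
constant in `|ν φ| ≤ C ‖φ‖` is `max |ν 1| |ν (-1)|`, so it only depends on `ν(±1)`. -/

section usce

variable {X : Type*} [TopologicalSpace X] {U : Set X} {g h : X → ℝ} {a b a' b' : ℝ}

theorem usce_le (hUd : Dense U) (hga : ∀ x, a ≤ g x) (hgb : ∀ x, g x ≤ b) (x : X) :
    usce U g x ≤ b := by
  unfold usce
  split_ifs
  · exact hgb x
  · have := mem_closure_iff_nhdsWithin_neBot.1 (hUd x)
    exact limsup_le_of_le (isCoboundedUnder_le_of_le _ hga) (.of_forall hgb)

theorem le_usce (hUd : Dense U) (hga : ∀ x, a ≤ g x) (hgb : ∀ x, g x ≤ b) (x : X) :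
    a ≤ usce U g x := by
  unfold usce
  split_ifs
  · exact hga x
  · have := mem_closure_iff_nhdsWithin_neBot.1 (hUd x)
    exact le_limsup_of_frequently_le (.of_forall hga) (isBoundedUnder_of ⟨b, hgb⟩)

theorem usce_mono (hUd : Dense U) (hga : ∀ x, a ≤ g x) (hhb : ∀ x, h x ≤ b) (hgh : g ≤ h) :
    usce U g ≤ usce U h := by
  intro x
  unfold usce
  split_ifs
  · exact hgh x
  · have := mem_closure_iff_nhdsWithin_neBot.1 (hUd x)
    exact limsup_le_limsup (.of_forall hgh) (isCoboundedUnder_le_of_le _ hga)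
      (isBoundedUnder_of ⟨b, hhb⟩)

theorem usce_add_le (hUd : Dense U) (hga : ∀ x, a ≤ g x) (hgb : ∀ x, g x ≤ b)
    (hha : ∀ x, a' ≤ h x) (hhb : ∀ x, h x ≤ b') (x : X) :
    usce U (g + h) x ≤ usce U g x + usce U h x := by
  unfold usce
  split_ifs
  · rfl
  · have := mem_closure_iff_nhdsWithin_neBot.1 (hUd x)
    exact limsup_add_le (isBoundedUnder_of ⟨a, hga⟩) (isBoundedUnder_of ⟨b, hgb⟩)
      (isCoboundedUnder_le_of_le _ hha) (isBoundedUnder_of ⟨b', hhb⟩)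

theorem usce_const_mul (hUd : Dense U) {c : ℝ} (hc : 0 < c)
    (hga : ∀ x, a ≤ g x) (hgb : ∀ x, g x ≤ b) (x : X) :
    usce U (fun y => c * g y) x = c * usce U g x := by
  unfold usce
  split_ifs
  · rfl
  · have := mem_closure_iff_nhdsWithin_neBot.1 (hUd x)
    have hcg_le : ∀ y, c * g y ≤ c * b := fun y => mul_le_mul_of_nonneg_left (hgb y) hc.le
    have hcg_ge : ∀ y, c * a ≤ c * g y := fun y => mul_le_mul_of_nonneg_left (hga y) hc.le
    exact ((OrderIso.mulLeft₀ c hc).limsup_apply (isBoundedUnder_of ⟨b, hgb⟩)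
      (isCoboundedUnder_le_of_le _ hga) (isBoundedUnder_of ⟨c * b, hcg_le⟩)
      (isCoboundedUnder_le_of_le _ hcg_ge)).symm

theorem usce_const (hUd : Dense U) (a : ℝ) : usce U (fun _ => a) = fun _ => a := by
  ext x
  unfold usce
  split_ifs
  · rfl
  · have := mem_closure_iff_nhdsWithin_neBot.1 (hUd x)
    exact limsup_const a

end usce

section uscPullback

variable {X Y : Type*} [TopologicalSpace X] [TopologicalSpace Y] {U : Set X} {f : X → Y}

theorem uscPullback_const (hUd : Dense U) (c : ℝ) :
    uscPullback U f (ContinuousMap.const Y c) = ContinuousMap.const X c :=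
  usce_const hUd c

variable [CompactSpace Y] {φ φ' : C(Y, ℝ)}

theorem uscPullback_le_norm (hUd : Dense U) (x : X) : uscPullback U f φ x ≤ ‖φ‖ :=
  usce_le hUd (fun _ => φ.neg_norm_le_apply _) (fun _ => φ.apply_le_norm _) x

theorem neg_norm_le_uscPullback (hUd : Dense U) (x : X) : -‖φ‖ ≤ uscPullback U f φ x :=
  le_usce hUd (fun _ => φ.neg_norm_le_apply _) (fun _ => φ.apply_le_norm _) x

theorem uscPullback_mono (hUd : Dense U) (hφ : φ ≤ φ') :
    uscPullback U f φ ≤ uscPullback U f φ' :=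
  usce_mono hUd (fun _ => φ.neg_norm_le_apply _) (fun _ => φ'.apply_le_norm _) fun _ => hφ _

theorem uscPullback_add_le (hUd : Dense U) (x : X) :
    uscPullback U f (φ + φ') x ≤ uscPullback U f φ x + uscPullback U f φ' x :=
  usce_add_le (g := fun y => φ (f y)) (h := fun y => φ' (f y)) hUd
    (fun _ => φ.neg_norm_le_apply _) (fun _ => φ.apply_le_norm _)
    (fun _ => φ'.neg_norm_le_apply _) (fun _ => φ'.apply_le_norm _) x

theorem uscPullback_smul (hUd : Dense U) {c : ℝ} (hc : 0 < c) (x : X) :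
    uscPullback U f (c • φ) x = c * uscPullback U f φ x :=
  usce_const_mul hUd hc (fun _ => φ.neg_norm_le_apply _) (fun _ => φ.apply_le_norm _) x

end uscPullback

section pushSM

variable {X Y : Type*} [TopologicalSpace X] [TopologicalSpace Y] [CompactSpace Y]
  {U : Set X} {f : X → Y} {μ : C(X, ℝ) → ℝ} {φ φ' : C(Y, ℝ)}

theorem pushSM_set_nonempty (hUd : Dense U) :
    {c : ℝ | ∃ ψ : C(X, ℝ), (∀ x, uscPullback U f φ x ≤ ψ x) ∧ μ ψ = c}.Nonempty :=
  ⟨_, ContinuousMap.const X ‖φ‖, uscPullback_le_norm hUd, rfl⟩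

theorem pushSM_set_bddBelow (hUd : Dense U) (hmono : Monotone μ) :
    BddBelow {c : ℝ | ∃ ψ : C(X, ℝ), (∀ x, uscPullback U f φ x ≤ ψ x) ∧ μ ψ = c} := by
  refine ⟨μ (ContinuousMap.const X (-‖φ‖)), ?_⟩
  rintro _ ⟨ψ, hψ, rfl⟩
  exact hmono fun x => (neg_norm_le_uscPullback hUd x).trans (hψ x)

variable [CompactSpace X]

theorem pushSM_le (hUd : Dense U) (hmono : Monotone μ) {ψ : C(X, ℝ)}
    (hψ : ∀ x, uscPullback U f φ x ≤ ψ x) : pushSM U f μ φ ≤ μ ψ :=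
  csInf_le (pushSM_set_bddBelow hUd hmono) ⟨ψ, hψ, rfl⟩

theorem le_pushSM (hUd : Dense U) {e : ℝ}
    (h : ∀ ψ : C(X, ℝ), (∀ x, uscPullback U f φ x ≤ ψ x) → e ≤ μ ψ) : e ≤ pushSM U f μ φ :=
  le_csInf (pushSM_set_nonempty hUd) fun _ ⟨ψ, hψ, hc⟩ => hc ▸ h ψ hψ

theorem pushSM_const (hUd : Dense U) (hmono : Monotone μ) (c : ℝ) :
    pushSM U f μ (ContinuousMap.const Y c) = μ (ContinuousMap.const X c) := by
  have hc : ∀ x, uscPullback U f (ContinuousMap.const Y c) x = c := by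
    simp [uscPullback_const hUd]
  exact le_antisymm (pushSM_le hUd hmono fun x => (hc x).le)
    (le_pushSM hUd fun ψ hψ => hmono fun x => (hc x).symm.trans_le (hψ x))

theorem pushSM_mono (hUd : Dense U) (hmono : Monotone μ) : Monotone (pushSM U f μ) :=
  fun _ _ hφ => le_pushSM hUd fun _ hψ =>
    pushSM_le hUd hmono fun x => (uscPullback_mono hUd hφ x).trans (hψ x)

theorem pushSM_add_le (hUd : Dense U) (hmono : Monotone μ)
    (hsub : ∀ ψ ψ' : C(X, ℝ), μ (ψ + ψ') ≤ μ ψ + μ ψ') :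
    pushSM U f μ (φ + φ') ≤ pushSM U f μ φ + pushSM U f μ φ' := by
  unfold pushSM
  rw [← csInf_add (pushSM_set_nonempty hUd) (pushSM_set_bddBelow hUd hmono)
    (pushSM_set_nonempty hUd) (pushSM_set_bddBelow hUd hmono)]
  refine le_csInf ((pushSM_set_nonempty hUd).add (pushSM_set_nonempty hUd)) ?_
  rintro _ ⟨_, ⟨ψ, hψ, rfl⟩, _, ⟨ψ', hψ', rfl⟩, rfl⟩
  refine (pushSM_le hUd hmono fun x => ?_).trans (hsub ψ ψ')
  exact (uscPullback_add_le hUd x).trans (add_le_add (hψ x) (hψ' x))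

theorem pushSM_smul_le (hUd : Dense U) (hmono : Monotone μ)
    (hhom : ∀ c : ℝ, 0 ≤ c → ∀ ψ : C(X, ℝ), μ (c • ψ) = c * μ ψ) {c : ℝ} (hc : 0 < c) :
    pushSM U f μ (c • φ) ≤ c * pushSM U f μ φ := by
  rw [← div_le_iff₀' hc]
  refine le_pushSM hUd fun ψ hψ => ?_
  rw [div_le_iff₀' hc, ← hhom c hc.le]
  refine pushSM_le hUd hmono fun x => ?_
  rw [uscPullback_smul hUd hc]
  exact mul_le_mul_of_nonneg_left (hψ x) hc.le

end pushSM

theorem smul_eq_mul_of_forall_smul_le {E : Type*} [AddCommGroup E] [Module ℝ E] {ν : E → ℝ}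
    (h0 : ν 0 = 0) (h : ∀ c : ℝ, 0 < c → ∀ φ, ν (c • φ) ≤ c * ν φ) :
    ∀ c : ℝ, 0 ≤ c → ∀ φ, ν (c • φ) = c * ν φ := by
  intro c hc φ
  rcases hc.eq_or_lt with rfl | hc
  · simp [h0]
  refine le_antisymm (h c hc φ) ?_
  have := h c⁻¹ (inv_pos.2 hc) (c • φ)
  rw [inv_smul_smul₀ hc.ne'] at this
  rwa [le_inv_mul_iff₀ hc] at this

section Functional

variable {X : Type*} [TopologicalSpace X] [CompactSpace X] {ν : C(X, ℝ) → ℝ}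

theorem abs_le_max_mul_norm (hhom : ∀ c : ℝ, 0 ≤ c → ∀ φ : C(X, ℝ), ν (c • φ) = c * ν φ)
    (hmono : Monotone ν) (φ : C(X, ℝ)) : |ν φ| ≤ max |ν 1| |ν (-1)| * ‖φ‖ := by
  have hup : ν φ ≤ ‖φ‖ * ν 1 := by
    rw [← hhom _ (norm_nonneg φ)]
    exact hmono fun x => by simpa using φ.apply_le_norm x
  have hlo : ‖φ‖ * ν (-1) ≤ ν φ := by
    rw [← hhom _ (norm_nonneg φ)]
    exact hmono fun x => by simpa using φ.neg_norm_le_apply x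
  have h1 : ν 1 ≤ max |ν 1| |ν (-1)| := (le_abs_self _).trans (le_max_left _ _)
  have h2 : -max |ν 1| |ν (-1)| ≤ ν (-1) := (neg_le_neg (le_max_right _ _)).trans (neg_abs_le _)
  rw [abs_le, mul_comm, ← mul_neg]
  exact ⟨(mul_le_mul_of_nonneg_left h2 (norm_nonneg φ)).trans hlo,
    hup.trans (mul_le_mul_of_nonneg_left h1 (norm_nonneg φ))⟩

theorem isLeast_max_abs_one_abs_neg_one [Nonempty X]
    (hhom : ∀ c : ℝ, 0 ≤ c → ∀ φ : C(X, ℝ), ν (c • φ) = c * ν φ) (hmono : Monotone ν) :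
    IsLeast {C : ℝ | ∀ φ : C(X, ℝ), |ν φ| ≤ C * ‖φ‖} (max |ν 1| |ν (-1)|) := by
  refine ⟨abs_le_max_mul_norm hhom hmono, fun C hC => max_le ?_ ?_⟩
  · simpa using hC 1
  · simpa using hC (-1)

theorem isStrongSubmeasure_of_monotone (hsub : ∀ φ ψ : C(X, ℝ), ν (φ + ψ) ≤ ν φ + ν ψ)
    (hhom : ∀ c : ℝ, 0 ≤ c → ∀ φ : C(X, ℝ), ν (c • φ) = c * ν φ) (hmono : Monotone ν) :
    IsStrongSubmeasure ν := by
  refine ⟨hsub, hhom, max |ν 1| |ν (-1)| + 1, by positivity, fun φ => ?_⟩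
  exact (abs_le_max_mul_norm hhom hmono φ).trans
    (mul_le_mul_of_nonneg_right (le_add_of_nonneg_right zero_le_one) (norm_nonneg φ))

end Functional

theorem pushSM_positive_mass_preserving_general {X Y : Type*} [MetricSpace X] [CompactSpace X]
    [Nonempty X] [MetricSpace Y] [CompactSpace Y] (U : Set X)
    (hUd : Dense U) (f : X → Y)
    (μ : C(X, ℝ) → ℝ) (hμ : IsStrongSubmeasure μ) (hmono : Monotone μ) :
    IsStrongSubmeasure (pushSM U f μ) ∧ Monotone (pushSM U f μ) ∧
    pushSM U f μ 1 = μ 1 ∧ pushSM U f μ (-1) = μ (-1) ∧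
    (∀ n : ℝ, IsLeast {C : ℝ | ∀ φ : C(X, ℝ), |μ φ| ≤ C * ‖φ‖} n →
      IsLeast {C : ℝ | ∀ φ : C(Y, ℝ), |pushSM U f μ φ| ≤ C * ‖φ‖} n) := by
  obtain ⟨hsub, hhom, -⟩ := hμ
  have : Nonempty Y := ⟨f (Classical.arbitrary X)⟩
  have hone : pushSM U f μ 1 = μ 1 := pushSM_const hUd hmono 1
  have hneg_one : pushSM U f μ (-1) = μ (-1) := pushSM_const hUd hmono (-1)
  have hpush_mono := pushSM_mono (f := f) hUd hmono
  have hpush_hom : ∀ c : ℝ, 0 ≤ c → ∀ φ : C(Y, ℝ), pushSM U f μ (c • φ) = c * pushSM U f μ φ :=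
    smul_eq_mul_of_forall_smul_le
      ((pushSM_const hUd hmono 0).trans (by simpa using hhom 0 le_rfl 0))
      fun _ hc _ => pushSM_smul_le hUd hmono hhom hc
  refine ⟨isStrongSubmeasure_of_monotone (fun _ _ => pushSM_add_le hUd hmono hsub)
    hpush_hom hpush_mono, hpush_mono, hone, hneg_one, fun n hn => ?_⟩
  rw [hn.unique (isLeast_max_abs_one_abs_neg_one hhom hmono), ← hone, ← hneg_one]
  exact isLeast_max_abs_one_abs_neg_one hpush_hom hpush_mono

/-- Mass preservation under pushforward: for a continuous open-dense defined map
`f : X ⇢ Y` and a positive strong submeasure `μ` on `X`, `f_*(μ)` is a positive strong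
submeasure on `Y`, `f_*(μ)(±1) = μ(±1)`, and `‖f_*(μ)‖ = ‖μ‖`. -/
theorem pushSM_positive_mass_preserving {X Y : Type*} [MetricSpace X] [CompactSpace X]
    [Nonempty X] [MetricSpace Y] [CompactSpace Y] (U : Set X) (hU : IsOpen U)
    (hUd : Dense U) (f : X → Y) (hf : ContinuousOn f U)
    (μ : C(X, ℝ) → ℝ) (hμ : IsStrongSubmeasure μ) (hmono : Monotone μ) :
    IsStrongSubmeasure (pushSM U f μ) ∧ Monotone (pushSM U f μ) ∧
    pushSM U f μ 1 = μ 1 ∧ pushSM U f μ (-1) = μ (-1) ∧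
    (∀ n : ℝ, IsLeast {C : ℝ | ∀ φ : C(X, ℝ), |μ φ| ≤ C * ‖φ‖} n →
      IsLeast {C : ℝ | ∀ φ : C(Y, ℝ), |pushSM U f μ φ| ≤ C * ‖φ‖} n) :=
  pushSM_positive_mass_preserving_general U hUd f μ hμ hmono
end
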